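/- Under the setting where R is {0,1}-valued with P(R = 1 | Z₁) = π₀(Z₁) ≥ ε > 0, R ⫫ Z₂ | Z₁, m is a bounded measurable function of Z₂, π(Z₁) is any measurable function with π(Z₁) ≥ ε > 0 (possibly misspecified), and the working model is correctly specified, h(Z₁) = E[m(Z₂) | Z₁], then E[ (R / π(Z₁)) m(Z₂) − ((R − π(Z₁)) / π(Z₁)) h(Z₁) ] = E[ m(Z₂) ]. -/

import Mathlib

/-!
The AIPW integrand equals `h(Z₁) + π(Z₁)⁻¹ · R · (m(Z₂) - h(Z₁))`. Given `Z₁`, `R` is independent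
of `m(Z₂)`, so `E[R m(Z₂) | Z₁] = E[R | Z₁] h(Z₁) = E[R h(Z₁) | Z₁]`: the residual
`R (m(Z₂) - h(Z₁))` has conditional mean zero, and so does its product with the bounded
`Z₁`-measurable weight `π(Z₁)⁻¹`, whatever `π` is. What remains is `E[h(Z₁)] = E[m(Z₂)]`.
-/

open MeasureTheory ProbabilityTheory

lemma ProbabilityTheory.Kernel.IndepFun.ae_indepFun {Ω β : Type*} [MeasurableSpace Ω]
    {_ : MeasurableSpace β} {κ : Kernel β Ω} [IsZeroOrMarkovKernel κ] {ν : Measure β}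
    {f g : Ω → ℝ} (hf : Measurable f) (hg : Measurable g) (hfg : Kernel.IndepFun f g κ ν) :
    ∀ᵐ b ∂ν, ProbabilityTheory.IndepFun f g (κ b) := by
  -- countably many rational half-lines generate the σ-algebras, so the a.e. product rule holds
  -- for all of them at once
  have hgen (u : Ω → ℝ) :
      MeasurableSpace.comap u inferInstance
        = .generateFrom ((u ⁻¹' ·) '' ⋃ a : ℚ, {Set.Iio (a : ℝ)}) := by
    rw [← MeasurableSpace.comap_generateFrom, ← Real.borel_eq_generateFrom_Iio_rat,
      ← BorelSpace.measurable_eq]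
  have hrat : ∀ᵐ b ∂ν, ∀ p q : ℚ, κ b (f ⁻¹' Set.Iio (p : ℝ) ∩ g ⁻¹' Set.Iio (q : ℝ))
      = κ b (f ⁻¹' Set.Iio (p : ℝ)) * κ b (g ⁻¹' Set.Iio (q : ℝ)) := by
    simp only [ae_all_iff]
    exact fun p q ↦ hfg _ _ ⟨_, measurableSet_Iio, rfl⟩ ⟨_, measurableSet_Iio, rfl⟩
  filter_upwards [hrat] with b hb
  refine IndepSets.indep hf.comap_le hg.comap_le (Real.isPiSystem_Iio_rat.comap f)
    (Real.isPiSystem_Iio_rat.comap g) (hgen f) (hgen g) ?_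
  rintro _ _ ⟨_, hs, rfl⟩ ⟨_, ht, rfl⟩
  simp only [Set.mem_iUnion, Set.mem_singleton_iff] at hs ht
  obtain ⟨p, rfl⟩ := hs
  obtain ⟨q, rfl⟩ := ht
  exact ae_of_all _ fun _ ↦ hb p q

section CondExp

variable {Ω : Type*} {m' mΩ : MeasurableSpace Ω} {μ : Measure Ω}

lemma ProbabilityTheory.CondIndepFun.condExp_mul [StandardBorelSpace Ω] [IsFiniteMeasure μ]
    {hm' : m' ≤ mΩ} {f g : Ω → ℝ} (hf : Measurable f) (hg : Measurable g)
    (hfg : CondIndepFun m' hm' f g μ) (hfi : Integrable f μ) (hgi : Integrable g μ)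
    (hfgi : Integrable (f * g) μ) :
    μ[f * g | m'] =ᵐ[μ] μ[f | m'] * μ[g | m'] := by
  have hindep := ae_of_ae_trim hm' (Kernel.IndepFun.ae_indepFun hf hg hfg)
  filter_upwards [hindep, condExp_ae_eq_integral_condExpKernel hm' hfgi,
    condExp_ae_eq_integral_condExpKernel hm' hfi, condExp_ae_eq_integral_condExpKernel hm' hgi]
    with ω hω hfgω hfω hgω
  rw [hfgω, Pi.mul_apply, hfω, hgω]
  exact hω.integral_mul_eq_mul_integral hf.aestronglyMeasurable hg.aestronglyMeasurable

lemma ProbabilityTheory.CondIndepFun.condExp_mul_sub_ae_eq_zero [StandardBorelSpace Ω]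
    [IsFiniteMeasure μ] {hm' : m' ≤ mΩ} {f g H : Ω → ℝ} (hf : Measurable f) (hg : Measurable g)
    (hfg : CondIndepFun m' hm' f g μ) {C : ℝ} (hfC : ∀ ω, ‖f ω‖ ≤ C) (hgi : Integrable g μ)
    (hgH : μ[g | m'] =ᵐ[μ] H) :
    μ[f * (g - H) | m'] =ᵐ[μ] 0 := by
  have hfi : Integrable f μ := (integrable_const C).mono' hf.aestronglyMeasurable (ae_of_all _ hfC)
  have hfgi : Integrable (f * g) μ := hgi.bdd_mul hf.aestronglyMeasurable (ae_of_all _ hfC)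
  have hfgi' : Integrable (f * μ[g | m']) μ :=
    integrable_condExp.bdd_mul hf.aestronglyMeasurable (ae_of_all _ hfC)
  have hH : f * (g - H) =ᵐ[μ] f * g - f * μ[g | m'] := by
    filter_upwards [hgH] with ω hω
    simp only [Pi.mul_apply, Pi.sub_apply, hω, mul_sub]
  filter_upwards [condExp_congr_ae hH, condExp_sub hfgi hfgi' m',
    hfg.condExp_mul hf hg hfi hgi hfgi,
    condExp_mul_of_stronglyMeasurable_right stronglyMeasurable_condExp hfgi' hfi]
    with ω hcongr hsub hmul hpull
  rw [hcongr, hsub, Pi.sub_apply, hmul, hpull, sub_self, Pi.zero_apply]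

lemma integral_mul_eq_zero_of_condExp_ae_eq_zero [IsFiniteMeasure μ] (hm' : m' ≤ mΩ)
    {w f : Ω → ℝ} (hw : StronglyMeasurable[m'] w) {C : ℝ} (hwC : ∀ᵐ ω ∂μ, ‖w ω‖ ≤ C)
    (hf : Integrable f μ) (hf0 : μ[f | m'] =ᵐ[μ] 0) :
    ∫ ω, w ω * f ω ∂μ = 0 := by
  calc ∫ ω, w ω * f ω ∂μ = ∫ ω, μ[w * f | m'] ω ∂μ := (integral_condExp hm').symm
    _ = ∫ ω, (w * μ[f | m']) ω ∂μ :=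
      integral_congr_ae (condExp_stronglyMeasurable_mul_of_bound hm' hw hf C hwC)
    _ = 0 := by
      rw [integral_congr_ae (hf0.mul_left (f₃ := w))]
      simp

end CondExp

theorem aipw_correct_outcome_general {Ω α : Type*} [MeasurableSpace Ω] [StandardBorelSpace Ω]
    [MeasurableSpace α] (μ : Measure Ω) [IsProbabilityMeasure μ]
    (Z₁ : Ω → α) (Z₂ : Ω → ℝ) (R : Ω → ℝ)
    (hZ₁ : Measurable Z₁) (hZ₂ : Measurable Z₂) (hR : Measurable R)
    (hR01 : ∀ ω, R ω = 0 ∨ R ω = 1)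
    (hci : CondIndepFun (MeasurableSpace.comap Z₁ inferInstance) hZ₁.comap_le R Z₂ μ)
    (π : α → ℝ) (hπ : Measurable π)
    (ε : ℝ) (hε : 0 < ε) (hπε : ∀ᵐ ω ∂μ, ε ≤ π (Z₁ ω))
    (m : ℝ → ℝ) (hm : Measurable m) (M : ℝ) (hM : ∀ t, |m t| ≤ M)
    (h : α → ℝ)
    (hwork : μ[fun ω => m (Z₂ ω) | MeasurableSpace.comap Z₁ inferInstance]
      =ᵐ[μ] fun ω => h (Z₁ ω)) :
    ∫ ω, ((R ω / π (Z₁ ω)) * m (Z₂ ω)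
        - ((R ω - π (Z₁ ω)) / π (Z₁ ω)) * h (Z₁ ω)) ∂μ
      = ∫ ω, m (Z₂ ω) ∂μ := by
  set F := MeasurableSpace.comap Z₁ inferInstance
  have hR1 (ω : Ω) : ‖R ω‖ ≤ 1 := by rcases hR01 ω with h0 | h0 <;> simp [h0]
  have hmZ₂ : Integrable (m ∘ Z₂) μ :=
    (integrable_const M).mono' (hm.comp hZ₂).aestronglyMeasurable (ae_of_all _ fun ω ↦ hM _)
  have hhZ₁ : Integrable (h ∘ Z₁) μ := integrable_condExp.congr hwork
  have hresid : μ[R * (m ∘ Z₂ - h ∘ Z₁) | F] =ᵐ[μ] 0 :=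
    (hci.comp measurable_id hm).condExp_mul_sub_ae_eq_zero hR (hm.comp hZ₂) hR1 hmZ₂ hwork
  have hweight : ∀ᵐ ω ∂μ, ‖(π (Z₁ ω))⁻¹‖ ≤ ε⁻¹ := by
    filter_upwards [hπε] with ω hω
    rw [norm_inv, Real.norm_of_nonneg (hε.le.trans hω)]
    exact inv_anti₀ hε hω
  have hresid_int : Integrable (R * (m ∘ Z₂ - h ∘ Z₁)) μ :=
    (hmZ₂.sub hhZ₁).bdd_mul hR.aestronglyMeasurable (ae_of_all _ hR1)
  have hweight_meas : StronglyMeasurable[F] fun ω ↦ (π (Z₁ ω))⁻¹ :=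
    (hπ.inv.comp (comap_measurable Z₁)).stronglyMeasurable
  have hintegrand : (fun ω ↦ (R ω / π (Z₁ ω)) * m (Z₂ ω)
        - ((R ω - π (Z₁ ω)) / π (Z₁ ω)) * h (Z₁ ω))
      =ᵐ[μ] fun ω ↦ (π (Z₁ ω))⁻¹ * (R * (m ∘ Z₂ - h ∘ Z₁)) ω + (h ∘ Z₁) ω := by
    filter_upwards [hπε] with ω hω
    have : π (Z₁ ω) ≠ 0 := (hε.trans_le hω).ne'
    simp only [Pi.mul_apply, Pi.sub_apply, Function.comp_apply]
    field_simp
    ring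
  have hweighted_int : Integrable (fun ω ↦ (π (Z₁ ω))⁻¹ * (R * (m ∘ Z₂ - h ∘ Z₁)) ω) μ :=
    hresid_int.bdd_mul (hweight_meas.mono hZ₁.comap_le).aestronglyMeasurable hweight
  rw [integral_congr_ae hintegrand, integral_add hweighted_int hhZ₁,
    integral_mul_eq_zero_of_condExp_ae_eq_zero hZ₁.comap_le hweight_meas hweight hresid_int
      hresid, zero_add]
  exact (integral_congr_ae hwork).symm.trans (integral_condExp hZ₁.comap_le)

/-- Double robustness, outcome-regression half: with correctly specified working model
`h(Z₁) = E[m(Z₂) | Z₁]`, the AIPW moment equals `E[m(Z₂)]` even for a possibly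
misspecified propensity `π` bounded below by `ε > 0`. -/
theorem aipw_correct_outcome {Ω α : Type*} [MeasurableSpace Ω] [StandardBorelSpace Ω]
    [Nonempty Ω] [MeasurableSpace α] (μ : Measure Ω) [IsProbabilityMeasure μ]
    (Z₁ : Ω → α) (Z₂ : Ω → ℝ) (R : Ω → ℝ)
    (hZ₁ : Measurable Z₁) (hZ₂ : Measurable Z₂) (hR : Measurable R)
    (hR01 : ∀ ω, R ω = 0 ∨ R ω = 1)
    (hci : CondIndepFun (MeasurableSpace.comap Z₁ inferInstance) hZ₁.comap_le R Z₂ μ)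
    (π₀ : α → ℝ) (hπ₀ : Measurable π₀)
    (ε₀ : ℝ) (hε₀ : 0 < ε₀) (hπ₀ε : ∀ᵐ ω ∂μ, ε₀ ≤ π₀ (Z₁ ω))
    (hprop : μ[R | MeasurableSpace.comap Z₁ inferInstance] =ᵐ[μ] fun ω => π₀ (Z₁ ω))
    (π : α → ℝ) (hπ : Measurable π)
    (ε : ℝ) (hε : 0 < ε) (hπε : ∀ᵐ ω ∂μ, ε ≤ π (Z₁ ω))
    (m : ℝ → ℝ) (hm : Measurable m) (M : ℝ) (hM : ∀ t, |m t| ≤ M)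
    (h : α → ℝ) (hh : Measurable h)
    (hwork : μ[fun ω => m (Z₂ ω) | MeasurableSpace.comap Z₁ inferInstance]
      =ᵐ[μ] fun ω => h (Z₁ ω)) :
    ∫ ω, ((R ω / π (Z₁ ω)) * m (Z₂ ω)
        - ((R ω - π (Z₁ ω)) / π (Z₁ ω)) * h (Z₁ ω)) ∂μ
      = ∫ ω, m (Z₂ ω) ∂μ :=
  aipw_correct_outcome_general μ Z₁ Z₂ R hZ₁ hZ₂ hR hR01 hci π hπ ε hε hπε m hm M hM h hwork
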